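/- arXiv:1211.4271 — 2 statements merged into one kernel-verified Lean document; each statement's English description precedes it below -/
import Mathlib

section
/- Let k ≥ 2 and a > 2k. There exists m_0 such that for every integer m ≥ m_0, the set F_m of m-aperiodic reduced words in the free group F_k has exponential growth rate at least (2k-1)·(1 − a·(2k-1)^{−m}). -/
/-!
Let `N n` be the number of `m`-aperiodic reduced words of length `n`. Each of them has at least
`2k - 1` reduced one-letter extensions. An extension that contains an `m`-th power ends in some
`u ^ m`, so it is determined by `|u|` and its prefix of length `n + 1 - (m - 1)|u|`, which is again
aperiodic. Hence `(2k - 1) N n ≤ N (n + 1) + ∑_{t ≥ 1} N (n + 1 - (m - 1) t)`.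
With `q = (2k - 1)(1 - a (2k - 1)^{-m})`, strong induction gives `q N n ≤ N (n + 1)`: by the
induction hypothesis the correction terms are bounded by a geometric series with ratio `q^{1-m}`,
of total size about `(2k - 1)^{2-m} N n`, which is at most
`((2k - 1) - q) N n = a (2k - 1)^{1-m} N n` once `m` is large, because `a > 2k - 1`.
So `N n ≥ q ^ n`.
-/

open Filter Set

/-- A word over the alphabet `Fin k × Bool` (generators and their inverses) is reduced if
no two consecutive letters are mutually inverse. -/
def ReducedWord {k : ℕ} (l : List (Fin k × Bool)) : Prop :=
  l.Chain' fun a b => b ≠ (a.1, !a.2)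

/-- A word contains an `m`-th power if some nonempty subword of the form `u^m` occurs. -/
def ContainsPower {k : ℕ} (m : ℕ) (l : List (Fin k × Bool)) : Prop :=
  ∃ p u s : List (Fin k × Bool), u ≠ [] ∧ l = p ++ (List.replicate m u).flatten ++ s

/-- The number of `m`-aperiodic reduced words of length at most `s`. -/
noncomputable def apCount (k m s : ℕ) : ℕ :=
  {l : List (Fin k × Bool) | ReducedWord l ∧ ¬ ContainsPower m l ∧ l.length ≤ s}.ncard

theorem List.append_flatten_replicate_succ {α : Type*} (p u : List α) (r : ℕ) :
    p ++ (List.replicate (r + 1) u).flatten =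
      (p ++ u) ++ (List.replicate r ((p ++ u).rtake u.length)).flatten := by
  have : (p ++ u).rtake u.length = u := by simp [List.rtake]
  simp [this, List.replicate_succ]

section Words

variable {k m : ℕ}

theorem ContainsPower.le_length {l : List (Fin k × Bool)} (h : ContainsPower m l) :
    m ≤ l.length := by
  obtain ⟨p, u, s, hu, rfl⟩ := h
  have : 1 ≤ u.length := List.length_pos_iff.2 hu
  simp only [List.length_append, List.length_flatten, List.map_replicate, List.sum_replicate,
    smul_eq_mul]
  nlinarith

theorem ContainsPower.mono {v w : List (Fin k × Bool)} (h : ContainsPower m v) (hvw : v <:+: w) :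
    ContainsPower m w := by
  obtain ⟨p, u, s, hu, rfl⟩ := h
  obtain ⟨a, b, rfl⟩ := hvw
  exact ⟨a ++ p, u, s ++ b, hu, by simp⟩

theorem ContainsPower.exists_eq_append_of_append_singleton {w : List (Fin k × Bool)}
    {x : Fin k × Bool} (h : ContainsPower m (w ++ [x])) (hw : ¬ ContainsPower m w) :
    ∃ p u, u ≠ [] ∧ w ++ [x] = p ++ (List.replicate m u).flatten := by
  obtain ⟨p, u, s, hu, hs⟩ := h
  refine ⟨p, u, hu, ?_⟩
  rcases List.eq_nil_or_concat s with rfl | ⟨s', y, rfl⟩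
  · simpa using hs
  · obtain ⟨hw', -⟩ := List.append_inj' (s₁ := w) (t₁ := [x])
      (s₂ := p ++ (List.replicate m u).flatten ++ s') (t₂ := [y]) (by simpa using hs) rfl
    exact absurd (ContainsPower.mono ⟨p, u, s', hu, rfl⟩ (hw' ▸ List.infix_refl _)) hw

end Words

section Reduced

variable {k : ℕ} {w : List (Fin k × Bool)}

theorem ReducedWord.append_singleton (hw : ReducedWord w) {x : Fin k × Bool}
    (hx : ∀ y ∈ w.getLast?, x ≠ (y.1, !y.2)) : ReducedWord (w ++ [x]) :=
  List.isChain_append.2 ⟨hw, List.isChain_singleton x, fun y hy z hz => by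
    obtain rfl : x = z := by simpa using hz
    exact hx y hy⟩

open scoped Classical in
theorem ReducedWord.two_mul_sub_one_le_card_extensions (hw : ReducedWord w) :
    2 * k - 1 ≤ (Finset.univ.filter fun x => ReducedWord (w ++ [x])).card := by
  set bad := (w.getLast?.map fun y => (y.1, !y.2)).toFinset
  have hbad : bad.card ≤ 1 := by cases h : w.getLast? <;> simp [bad, h]
  calc 2 * k - 1 ≤ Finset.univ.card - bad.card := by simp; omega
    _ ≤ (Finset.univ \ bad).card := Finset.le_card_sdiff _ _
    _ ≤ _ := Finset.card_le_card fun x hx => Finset.mem_filter.2 ⟨Finset.mem_univ x,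
        hw.append_singleton fun y hy hxy =>
          (Finset.mem_sdiff.1 hx).2 (by simp [bad, Option.mem_def.1 hy, hxy])⟩

end Reduced

def aperiodicWords (k m n : ℕ) : Set (List (Fin k × Bool)) :=
  {l | ReducedWord l ∧ ¬ ContainsPower m l ∧ l.length = n}

noncomputable def numAperiodic (k m n : ℕ) : ℕ := (aperiodicWords k m n).ncard

section Aperiodic

variable {k m : ℕ}

theorem aperiodicWords_finite (k m n : ℕ) : (aperiodicWords k m n).Finite :=
  (List.finite_length_eq _ n).subset fun _ hl => hl.2.2

theorem numAperiodic_eq_card (n : ℕ) :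
    numAperiodic k m n = (aperiodicWords_finite k m n).toFinset.card :=
  Set.ncard_eq_toFinset_card _ _

theorem numAperiodic_zero (hm : 1 ≤ m) : numAperiodic k m 0 = 1 := by
  have : aperiodicWords k m 0 = {[]} := by
    ext l
    refine ⟨fun hl => List.length_eq_zero_iff.1 hl.2.2, ?_⟩
    rintro rfl
    exact ⟨List.isChain_nil, fun h => by simpa using h.le_length.trans_lt' hm, rfl⟩
  simp [numAperiodic, this]

theorem numAperiodic_le_apCount (n : ℕ) : numAperiodic k m n ≤ apCount k m n :=
  Set.ncard_le_ncard (fun _ hl => ⟨hl.1, hl.2.1, hl.2.2.le⟩)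
    ((List.finite_length_le _ n).subset fun _ hl => hl.2.2)

theorem apCount_le_pow (k m r : ℕ) : apCount k m r ≤ (2 * k + 1) ^ (r + 1) := by
  have hinj : Set.InjOn (fun l : List (Fin k × Bool) => fun i : Fin (r + 1) => l[(i : ℕ)]?)
      {l | ReducedWord l ∧ ¬ ContainsPower m l ∧ l.length ≤ r} := by
    intro l₁ h₁ l₂ h₂ h
    refine List.ext_getElem? fun i => ?_
    by_cases hi : i < r + 1
    · exact congrFun h ⟨i, hi⟩
    · rw [List.getElem?_eq_none (by grind), List.getElem?_eq_none (by grind)]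
  calc apCount k m r ≤ (Set.univ : Set (Fin (r + 1) → Option (Fin k × Bool))).ncard :=
        Set.ncard_le_ncard_of_injOn _ (fun _ _ => trivial) hinj Set.finite_univ
    _ = (2 * k + 1) ^ (r + 1) := by simp [Set.ncard_univ, mul_comm]

theorem exists_mem_aperiodicWords_of_containsPower_append (hm : 2 ≤ m) {n : ℕ}
    {w : List (Fin k × Bool)} {x : Fin k × Bool} (hw : w ∈ aperiodicWords k m n)
    (h : ContainsPower m (w ++ [x])) :
    ∃ t ∈ Finset.Icc 1 ((n + 1) / m), ∃ v ∈ aperiodicWords k m (n + 1 - t * (m - 1)),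
      v ++ (List.replicate (m - 1) (v.rtake t)).flatten = w ++ [x] := by
  obtain ⟨p, u, hu, he⟩ := h.exists_eq_append_of_append_singleton hw.2.1
  obtain ⟨r, rfl⟩ : ∃ r, m = r + 2 := ⟨m - 2, by omega⟩
  have ht : 1 ≤ u.length := List.length_pos_iff.2 hu
  have hlen : n + 1 = p.length + (r + 2) * u.length := by
    simpa [hw.2.2, mul_comm] using congrArg List.length he
  rw [List.append_flatten_replicate_succ] at he
  have hvw : p ++ u <+: w :=
    List.prefix_of_prefix_length_le ⟨_, he.symm⟩ (List.prefix_append w [x])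
      (by simp only [List.length_append, hw.2.2]; nlinarith)
  refine ⟨u.length,
    Finset.mem_Icc.2 ⟨ht, (Nat.le_div_iff_mul_le (by omega)).2 (by nlinarith)⟩, p ++ u,
    ⟨hw.1.prefix hvw, fun hc => hw.2.1 (hc.mono hvw.isInfix), ?_⟩, he.symm⟩
  have : (r + 2) * u.length = u.length * (r + 1) + u.length := by ring
  simp only [List.length_append, show r + 2 - 1 = r + 1 from rfl]
  omega

theorem two_mul_sub_one_mul_numAperiodic_le (hm : 2 ≤ m) (n : ℕ) :
    (2 * k - 1) * numAperiodic k m n ≤ numAperiodic k m (n + 1) +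
      ∑ t ∈ Finset.Icc 1 ((n + 1) / m), numAperiodic k m (n + 1 - t * (m - 1)) := by
  classical
  simp only [numAperiodic_eq_card]
  set A := fun n => (aperiodicWords_finite k m n).toFinset
  let extensions := (A n).biUnion fun w =>
    (Finset.univ.filter fun x => ReducedWord (w ++ [x])).image (w ++ [·])
  have hext : (2 * k - 1) * (A n).card ≤ extensions.card := by
    rw [Finset.card_biUnion ?_, mul_comm, ← smul_eq_mul]
    · refine Finset.card_nsmul_le_sum _ _ _ fun w hw => ?_
      rw [Finset.card_image_of_injective _ fun x y h => by simpa using h]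
      exact (Set.Finite.mem_toFinset _ |>.1 hw).1.two_mul_sub_one_le_card_extensions
    · intro w₁ _ w₂ _ hne
      refine Finset.disjoint_left.2 fun e he₁ he₂ => hne ?_
      obtain ⟨x, -, rfl⟩ := Finset.mem_image.1 he₁
      obtain ⟨y, -, hxy⟩ := Finset.mem_image.1 he₂
      exact (List.append_inj_left' hxy rfl).symm
  have hsub : extensions ⊆ A (n + 1) ∪ (Finset.Icc 1 ((n + 1) / m)).biUnion fun t =>
      (A (n + 1 - t * (m - 1))).image
        fun v => v ++ (List.replicate (m - 1) (v.rtake t)).flatten := by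
    intro e he
    obtain ⟨w, hw, he⟩ := Finset.mem_biUnion.1 he
    obtain ⟨x, hx, rfl⟩ := Finset.mem_image.1 he
    rw [Set.Finite.mem_toFinset] at hw
    by_cases hc : ContainsPower m (w ++ [x])
    · obtain ⟨t, ht, v, hv, hvw⟩ := exists_mem_aperiodicWords_of_containsPower_append hm hw hc
      exact Finset.mem_union_right _ (Finset.mem_biUnion.2
        ⟨t, ht, Finset.mem_image.2 ⟨v, (Set.Finite.mem_toFinset _).2 hv, hvw⟩⟩)
    · exact Finset.mem_union_left _ ((Set.Finite.mem_toFinset _).2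
        ⟨(Finset.mem_filter.1 hx).2, hc, by simp [hw.2.2]⟩)
  calc (2 * k - 1) * (A n).card ≤ extensions.card := hext
    _ ≤ _ := (Finset.card_le_card hsub).trans (Finset.card_union_le _ _)
    _ ≤ _ := Nat.add_le_add_left (Finset.card_biUnion_le.trans
      (Finset.sum_le_sum fun t _ => Finset.card_image_le)) _

end Aperiodic

section Growth

open Topology

theorem pow_mul_le_of_forall_mul_le_succ {R : Type*} [CommSemiring R] [PartialOrder R]
    [IsOrderedRing R] {N : ℕ → R} {q : R} {n : ℕ} (hq : 0 ≤ q)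
    (h : ∀ i < n, q * N i ≤ N (i + 1)) {i j : ℕ} (hij : i + j ≤ n) :
    q ^ j * N i ≤ N (i + j) := by
  induction j with
  | zero => simp
  | succ j ih =>
    calc q ^ (j + 1) * N i = q * (q ^ j * N i) := by ring
      _ ≤ q * N (i + j) := mul_le_mul_of_nonneg_left (ih (by omega)) hq
      _ ≤ N (i + j + 1) := h _ (by omega)

theorem mul_le_succ_of_le_add_sum {N : ℕ → ℝ} {β q : ℝ} {M : ℕ} (hN : ∀ n, 0 ≤ N n)
    (hq : 0 < q) (hqM : 1 < q ^ M) (hgeom : q / (q ^ M - 1) ≤ β - q)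
    (hrec : ∀ n, β * N n ≤ N (n + 1) +
      ∑ t ∈ Finset.Icc 1 ((n + 1) / (M + 1)), N (n + 1 - t * M))
    (n : ℕ) : q * N n ≤ N (n + 1) := by
  induction n using Nat.strong_induction_on with
  | _ n ih =>
  have hM : M ≠ 0 := by rintro rfl; simp at hqM
  set c := (q ^ M)⁻¹
  have hterm : ∀ t ∈ Finset.Icc 1 ((n + 1) / (M + 1)),
      N (n + 1 - t * M) ≤ N n * (q * c ^ t) := by
    intro t ht
    obtain ⟨ht1, htn⟩ := Finset.mem_Icc.1 ht
    have htM : t * (M + 1) ≤ n + 1 := (Nat.le_div_iff_mul_le (by omega)).1 htn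
    have htM' : 1 ≤ t * M := Nat.mul_le_mul ht1 (Nat.one_le_iff_ne_zero.2 hM)
    obtain ⟨j, hj⟩ : ∃ j, t * M = j + 1 := ⟨t * M - 1, by omega⟩
    have hjn : j ≤ n := by rw [mul_add, mul_one] at htM; omega
    have hchain := pow_mul_le_of_forall_mul_le_succ hq.le ih (i := n - j) (j := j) (by omega)
    rw [Nat.sub_add_cancel hjn] at hchain
    rw [hj, show n + 1 - (j + 1) = n - j by omega]
    have hc : q * c ^ t = (q ^ j)⁻¹ := by
      rw [inv_pow, ← pow_mul, mul_comm M, hj, pow_succ', mul_inv, ← mul_assoc,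
        mul_inv_cancel₀ hq.ne', one_mul]
    rw [hc, ← div_eq_mul_inv, le_div_iff₀ (pow_pos hq j), mul_comm]
    exact hchain
  have hc0 : 0 ≤ c := inv_nonneg.2 (pow_nonneg hq.le M)
  have hc1 : c < 1 := inv_lt_one_of_one_lt₀ hqM
  have hgeom_sum : ∀ T, q * ∑ t ∈ Finset.Icc 1 T, c ^ t ≤ β - q := fun T => calc
    q * ∑ t ∈ Finset.Icc 1 T, c ^ t ≤ q * (c ^ 1 / (1 - c)) := by
      rw [← Finset.Ico_add_one_right_eq_Icc]
      exact mul_le_mul_of_nonneg_left (geom_sum_Ico_le_of_lt_one hc0 hc1) hq.le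
    _ = q / (q ^ M - 1) := by
      have : q ^ M - 1 ≠ 0 := by linarith
      simp only [c, pow_one]
      field_simp
    _ ≤ β - q := hgeom
  have hsum :
      ∑ t ∈ Finset.Icc 1 ((n + 1) / (M + 1)), N (n + 1 - t * M) ≤ N n * (β - q) := calc
    _ ≤ ∑ t ∈ Finset.Icc 1 ((n + 1) / (M + 1)), N n * (q * c ^ t) := Finset.sum_le_sum hterm
    _ = N n * (q * ∑ t ∈ Finset.Icc 1 ((n + 1) / (M + 1)), c ^ t) := by
      rw [Finset.mul_sum, Finset.mul_sum]
    _ ≤ N n * (β - q) := mul_le_mul_of_nonneg_left (hgeom_sum _) (hN n)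
  linarith [hrec n]

theorem div_pow_sub_one_le_sub_of_add_mul_le {β a δ q : ℝ} {M : ℕ} (hβ : 0 < β) (ha : 0 < a)
    (hδ : δ = a / β ^ (M + 1)) (hq : q = β * (1 - δ)) (h : β + a * (M + 1) * δ ≤ a) :
    0 < q ∧ 1 < q ^ M ∧ q / (q ^ M - 1) ≤ β - q := by
  have hβM : 0 < β ^ M := pow_pos hβ M
  have hδβ : δ * β ^ (M + 1) = a := by rw [hδ]; field_simp
  have hδ0 : 0 < δ := hδ ▸ div_pos ha (pow_pos hβ _)
  have hδ1 : (M + 1) * δ < 1 := by nlinarith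
  have hq0 : 0 < q := by rw [hq]; nlinarith
  have hbern : 1 - M * δ ≤ (1 - δ) ^ M := by
    simpa [sub_eq_add_neg] using one_add_mul_le_pow (a := -δ) (by nlinarith) M
  have hkey : q * β ^ M + a ≤ a * q ^ M := calc
    q * β ^ M + a = β ^ M * β := by rw [hq, ← hδβ]; ring
    _ ≤ β ^ M * (a * (1 - M * δ)) := mul_le_mul_of_nonneg_left (by nlinarith) hβM.le
    _ ≤ β ^ M * (a * (1 - δ) ^ M) := by gcongr
    _ = a * q ^ M := by rw [hq, mul_pow]; ring
  have hqM : 1 < q ^ M := by nlinarith [mul_pos hq0 hβM]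
  refine ⟨hq0, hqM, ?_⟩
  have hβq : (β - q) * β ^ M = a := by rw [hq, ← hδβ]; ring
  rw [div_le_iff₀ (by linarith), ← mul_le_mul_iff_of_pos_right hβM]
  nlinarith

theorem eventually_add_mul_div_pow_le {β a : ℝ} (hβ : 1 < β) (ha : β < a) :
    ∀ᶠ m : ℕ in atTop, β + a * m * (a / β ^ m) ≤ a := by
  have ht : Tendsto (fun m : ℕ => a ^ 2 * (m * β⁻¹ ^ m)) atTop (𝓝 0) := by
    simpa using (tendsto_self_mul_const_pow_of_lt_one (inv_nonneg.2 (by linarith))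
      (inv_lt_one_of_one_lt₀ hβ)).const_mul (a ^ 2)
  filter_upwards [ht.eventually (ge_mem_nhds (sub_pos.2 ha))] with m hm
  have : a * m * (a / β ^ m) = a ^ 2 * (m * β⁻¹ ^ m) := by
    rw [inv_pow, div_eq_mul_inv]; ring
  linarith

theorem le_limsup_rpow_inv_of_pow_le {u : ℕ → ℝ} {q C : ℝ} (hq : 0 ≤ q)
    (hlow : ∀ r, q ^ r ≤ u r) (hup : ∀ r, u r ≤ C ^ (r + 1)) :
    q ≤ limsup (fun r : ℕ => u r ^ (r : ℝ)⁻¹) atTop := by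
  have hu : ∀ r, 0 ≤ u r := fun r => (pow_nonneg hq r).trans (hlow r)
  have hC : 1 ≤ C := by simpa using (hlow 0).trans (hup 0)
  refine le_limsup_of_frequently_le (Eventually.frequently ?_)
    (isBoundedUnder_of_eventually_le (a := C ^ 2) ?_)
  · filter_upwards [eventually_ne_atTop 0] with r hr
    calc q = (q ^ r) ^ (r : ℝ)⁻¹ := (Real.pow_rpow_inv_natCast hq hr).symm
      _ ≤ u r ^ (r : ℝ)⁻¹ := Real.rpow_le_rpow (pow_nonneg hq r) (hlow r) (by positivity)
  · filter_upwards [eventually_ne_atTop 0] with r hr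
    calc u r ^ (r : ℝ)⁻¹ ≤ ((C ^ 2) ^ r) ^ (r : ℝ)⁻¹ := by
          refine Real.rpow_le_rpow (hu r) ((hup r).trans ?_) (by positivity)
          rw [← pow_mul]
          exact pow_le_pow_right₀ hC (by omega)
      _ = C ^ 2 := Real.pow_rpow_inv_natCast (by positivity) hr

end Growth

/-- For `k ≥ 2` and `a > 2k` there is `m₀` such that for all `m ≥ m₀` the exponential growth
rate of the set of `m`-aperiodic reduced words is at least `(2k-1)(1 - a(2k-1)^{-m})`. -/
theorem aperiodic_growth_rate (k : ℕ) (hk : 2 ≤ k) (a : ℝ) (ha : 2 * k < a) :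
    ∃ m₀ : ℕ, ∀ m : ℕ, m₀ ≤ m →
      (2 * k - 1 : ℝ) * (1 - a / (2 * k - 1 : ℝ) ^ m) ≤
        Filter.limsup (fun r : ℕ => ((apCount k m r : ℝ)) ^ ((r : ℝ)⁻¹)) atTop := by
  have hk' : (2 : ℝ) ≤ k := by exact_mod_cast hk
  set β : ℝ := 2 * k - 1 with hβ_def
  have hβ : 1 < β := by linarith
  obtain ⟨m₀, hm₀⟩ := ((eventually_ge_atTop 2).and
    (eventually_add_mul_div_pow_le hβ (by linarith))).exists_forall_of_atTop
  refine ⟨m₀, fun m hm => ?_⟩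
  obtain ⟨hm2, hcond⟩ := hm₀ m hm
  obtain ⟨M, rfl⟩ : ∃ M, m = M + 1 := ⟨m - 1, by omega⟩
  set q : ℝ := β * (1 - a / β ^ (M + 1))
  obtain ⟨hq, hqM, hgeom⟩ := div_pow_sub_one_le_sub_of_add_mul_le (β := β) (q := q)
    (by linarith) (by linarith) rfl rfl (by exact_mod_cast hcond)
  have hrec (n : ℕ) : β * numAperiodic k (M + 1) n ≤ numAperiodic k (M + 1) (n + 1) +
      ∑ t ∈ Finset.Icc 1 ((n + 1) / (M + 1)),
        (numAperiodic k (M + 1) (n + 1 - t * M) : ℝ) := by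
    have := two_mul_sub_one_mul_numAperiodic_le (k := k) hm2 n
    rw [Nat.add_sub_cancel] at this
    have hcast := (Nat.cast_le (α := ℝ)).2 this
    push_cast [Nat.cast_sub (by omega : 1 ≤ 2 * k)] at hcast
    exact hcast
  have hgrowth := mul_le_succ_of_le_add_sum (fun n => Nat.cast_nonneg _) hq hqM hgeom hrec
  refine le_limsup_rpow_inv_of_pow_le (C := 2 * k + 1) hq.le (fun r => ?_)
    (fun r => by exact_mod_cast apCount_le_pow k (M + 1) r)
  calc q ^ r = q ^ r * (numAperiodic k (M + 1) 0 : ℝ) := by simp [numAperiodic_zero]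
    _ ≤ numAperiodic k (M + 1) r := by
      simpa using pow_mul_le_of_forall_mul_le_succ hq.le (fun i _ => hgrowth i) (le_refl (0 + r))
    _ ≤ apCount k (M + 1) r := by exact_mod_cast numAperiodic_le_apCount r
end

section
/- Let G be a hyperbolic group with finitely many cone types, growth rate λ > 1, and Coornaert bound |B(r)| ≤ α·λ^r. Call a cone type T essential if there exists a > 0 such that for all r there is s ≥ r with |T ∩ B(s)| ≥ a·λ^s; call g ∈ G essential if T_g is. If g ∈ G and u ∈ T_g with gu essential, then g is essential. -/
open Filter Set

/-- Word length of `g` with respect to the symmetrized generating set `S ∪ S⁻¹`. -/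
noncomputable def wordLength {G : Type*} [Group G] (S : Set G) (g : G) : ℕ :=
  sInf {n | ∃ l : List G, l.length = n ∧ (∀ x ∈ l, x ∈ S ∪ S⁻¹) ∧ l.prod = g}

/-- The ball of radius `r` in the word metric. -/
noncomputable def wordBall {G : Type*} [Group G] (S : Set G) (r : ℕ) : Set G :=
  {g | wordLength S g ≤ r}

/-- The cone type of `g`: the set of `u` such that some geodesic from `1` to `gu` passes
through `g`, i.e. `|gu| = |g| + |u|`. -/
noncomputable def coneType {G : Type*} [Group G] (S : Set G) (g : G) : Set G :=
  {u | wordLength S (g * u) = wordLength S g + wordLength S u}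

/-- `g` is essential (its cone type is essential): there is `a > 0` such that for every `r`
there is `s ≥ r` with `|T_g ∩ B(s)| ≥ a·λ^s`. -/
def Essential {G : Type*} [Group G] (S : Set G) (lam : ℝ) (g : G) : Prop :=
  ∃ a > (0 : ℝ), ∀ r : ℕ, ∃ s ≥ r, a * lam ^ s ≤ ((coneType S g ∩ wordBall S s).ncard : ℝ)

/-!
The cone type of `g` contains the translate `u • T_{gu}` (a geodesic through `g` and then `gu`
passes through `g`), and left multiplication by `u` moves the ball of radius `s` into the ball of
radius `s + |u|`. Hence `|T_{gu} ∩ B(s)| ≤ |T_g ∩ B(s + |u|)|`, and the essentialness constant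
of `gu` divided by `λ^|u|` works for `g`.
-/

section WordMetric

variable {G : Type*} [Group G] {S : Set G}

theorem exists_list_length_eq_wordLength (hgen : Subgroup.closure S = ⊤) (g : G) :
    ∃ l : List G, l.length = wordLength S g ∧ (∀ x ∈ l, x ∈ S ∪ S⁻¹) ∧ l.prod = g := by
  have hg : g ∈ Submonoid.closure (S ∪ S⁻¹) := by
    rw [← Subgroup.closure_toSubmonoid, hgen]
    trivial
  obtain ⟨l, hl, hprod⟩ := Submonoid.exists_list_of_mem_closure hg
  exact Nat.sInf_mem (s := {n | ∃ l : List G, l.length = n ∧ (∀ x ∈ l, x ∈ S ∪ S⁻¹) ∧ l.prod = g})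
    ⟨l.length, l, rfl, hl, hprod⟩

theorem wordLength_mul_le (hgen : Subgroup.closure S = ⊤) (g h : G) :
    wordLength S (g * h) ≤ wordLength S g + wordLength S h := by
  obtain ⟨l₁, hlen₁, hmem₁, rfl⟩ := exists_list_length_eq_wordLength hgen g
  obtain ⟨l₂, hlen₂, hmem₂, rfl⟩ := exists_list_length_eq_wordLength hgen h
  refine Nat.sInf_le ⟨l₁ ++ l₂, by simp [hlen₁, hlen₂], ?_, List.prod_append⟩
  simp only [List.mem_append]
  rintro x (hx | hx)
  exacts [hmem₁ x hx, hmem₂ x hx]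

theorem wordBall_finite (hS : S.Finite) (hgen : Subgroup.closure S = ⊤) (r : ℕ) :
    (wordBall S r).Finite := by
  let T := S ∪ S⁻¹
  have : Finite T := (hS.union hS.inv).to_subtype
  refine ((List.finite_length_le T r).image fun l ↦ (l.map Subtype.val).prod).subset ?_
  intro g hg
  obtain ⟨l, hlen, hmem, rfl⟩ := exists_list_length_eq_wordLength hgen g
  lift l to List T using hmem
  refine ⟨l, ?_, rfl⟩
  rw [mem_ofPred_eq, ← List.length_map Subtype.val, hlen]
  exact hg

theorem mul_mem_wordBall (hgen : Subgroup.closure S = ⊤) {v : G} {s : ℕ} (hv : v ∈ wordBall S s)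
    (u : G) : u * v ∈ wordBall S (s + wordLength S u) := by
  have := wordLength_mul_le hgen u v
  simp only [wordBall, mem_ofPred_eq] at hv ⊢
  omega

theorem mul_mem_coneType (hgen : Subgroup.closure S = ⊤) {g u v : G}
    (hu : u ∈ coneType S g) (hv : v ∈ coneType S (g * u)) : u * v ∈ coneType S g := by
  have hle₁ := wordLength_mul_le hgen g (u * v)
  have hle₂ := wordLength_mul_le hgen u v
  simp only [coneType, mem_ofPred_eq, mul_assoc] at hu hv ⊢
  omega

theorem image_mul_coneType_inter_wordBall_subset (hgen : Subgroup.closure S = ⊤) {g u : G}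
    (hu : u ∈ coneType S g) (s : ℕ) :
    (u * ·) '' (coneType S (g * u) ∩ wordBall S s) ⊆
      coneType S g ∩ wordBall S (s + wordLength S u) := by
  rintro _ ⟨v, ⟨hvT, hvB⟩, rfl⟩
  exact ⟨mul_mem_coneType hgen hu hvT, mul_mem_wordBall hgen hvB u⟩

theorem ncard_coneType_mul_inter_wordBall_le (hS : S.Finite) (hgen : Subgroup.closure S = ⊤)
    {g u : G} (hu : u ∈ coneType S g) (s : ℕ) :
    (coneType S (g * u) ∩ wordBall S s).ncard ≤
      (coneType S g ∩ wordBall S (s + wordLength S u)).ncard := by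
  rw [← ncard_image_of_injective _ (mul_right_injective u)]
  exact ncard_le_ncard (image_mul_coneType_inter_wordBall_subset hgen hu s)
    ((wordBall_finite hS hgen _).subset inter_subset_right)

theorem Essential.of_ncard_le_shift {lam : ℝ} (hlam : 0 < lam) {g h : G} (n : ℕ)
    (hle : ∀ s, (coneType S h ∩ wordBall S s).ncard ≤ (coneType S g ∩ wordBall S (s + n)).ncard)
    (hh : Essential S lam h) : Essential S lam g := by
  obtain ⟨a, ha, hA⟩ := hh
  refine ⟨a / lam ^ n, by positivity, fun r ↦ ?_⟩
  obtain ⟨s, hs, hcard⟩ := hA r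
  refine ⟨s + n, le_add_right hs, ?_⟩
  calc a / lam ^ n * lam ^ (s + n) = a * lam ^ s := by
        rw [pow_add]
        field_simp
    _ ≤ _ := hcard
    _ ≤ _ := by exact_mod_cast hle s

end WordMetric

theorem essential_of_extension_essential_general {G : Type*} [Group G] (S : Finset G)
    (hgen : Subgroup.closure (S : Set G) = ⊤) (lam : ℝ) (hlam : 1 < lam)
    (g u : G) (hu : u ∈ coneType (S : Set G) g)
    (hess : Essential (S : Set G) lam (g * u)) :
    Essential (S : Set G) lam g :=
  hess.of_ncard_le_shift (zero_lt_one.trans hlam) _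
    (ncard_coneType_mul_inter_wordBall_le S.finite_toSet hgen hu)

/-- In a hyperbolic group with finitely many cone types, growth rate `λ > 1` and Coornaert
bound `|B(r)| ≤ α·λ^r`: if `u ∈ T_g` and `gu` is essential, then `g` is essential. -/
theorem essential_of_extension_essential {G : Type*} [Group G] (S : Finset G)
    (hgen : Subgroup.closure (S : Set G) = ⊤) (lam α : ℝ) (hlam : 1 < lam) (hα : 1 ≤ α)
    (hcoo : ∀ r : ℕ, ((wordBall (S : Set G) r).ncard : ℝ) ≤ α * lam ^ r)
    (hfin : (Set.range (coneType (S : Set G))).Finite)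
    (g u : G) (hu : u ∈ coneType (S : Set G) g)
    (hess : Essential (S : Set G) lam (g * u)) :
    Essential (S : Set G) lam g :=
  essential_of_extension_essential_general S hgen lam hlam g u hu hess
end
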